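/- Let (T,σ) be a leaf-colored tree explaining the BMG (𝔾,σ) and let e = uv be an edge of T with v a child of u. Then contracting e yields a tree explaining the same BMG (e is redundant) if and only if (i) e is an inner edge of T (i.e., v is not a leaf and u is not the planted root), and (ii) there is no arc (a,b) ∈ E(𝔾) with lca_T(a,b) = v and σ(b) ∈ σ(L(T(u)) \ L(T(v))). -/

import Mathlib

/-- A finite rooted tree, given by a parent function: every vertex reaches the
root along the parent chain. -/
structure PTree (V : Type*) where
  parent : V → Option V
  root : V
  root_parent : parent root = none
  connected : ∀ v : V, Relation.ReflTransGen (fun a b => parent a = some b) v root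

namespace PTree

variable {V C : Type*}

/-- `T.anc a b` : `b` is an ancestor of `a` (i.e. `a ⪯ b` in the ancestor order). -/
def anc (T : PTree V) (a b : V) : Prop :=
  Relation.ReflTransGen (fun x y => T.parent x = some y) a b

/-- `v` is a child of `u`. -/
def child (T : PTree V) (v u : V) : Prop := T.parent v = some u

/-- A leaf is a vertex without children. -/
def isLeaf (T : PTree V) (v : V) : Prop := ∀ w, ¬ T.child w v

/-- `u` is the last common ancestor of `x` and `y`. -/
def isLCA (T : PTree V) (u x y : V) : Prop :=
  T.anc x u ∧ T.anc y u ∧ ∀ w, T.anc x w → T.anc y w → T.anc u w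

/-- `σ(L(T(v)))` : the set of colors of the leaves of the subtree rooted at `v`. -/
def leafColors (T : PTree V) (σ : V → C) (v : V) : Set C :=
  {c | ∃ x, T.isLeaf x ∧ T.anc x v ∧ σ x = c}

/-- `y` is a best match of `x` in `(T,σ)`. -/
def bestMatch (T : PTree V) (σ : V → C) (x y : V) : Prop :=
  T.isLeaf x ∧ T.isLeaf y ∧ σ x ≠ σ y ∧
    ∀ y', T.isLeaf y' → σ y' = σ y →
      ∀ u u', T.isLCA u x y → T.isLCA u' x y' → T.anc u u'

/-- `x` and `y` are reciprocal best matches, i.e. `xy` is an edge of the BMG `G(T,σ)`. -/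
def edge (T : PTree V) (σ : V → C) (x y : V) : Prop :=
  T.bestMatch σ x y ∧ T.bestMatch σ y x

/-- Every inner vertex (other than the planted root) has exactly two children. -/
def Binary (T : PTree V) : Prop :=
  ∀ u : V, u ≠ T.root → ¬ T.isLeaf u →
    ∃ v₁ v₂, v₁ ≠ v₂ ∧ T.child v₁ u ∧ T.child v₂ u ∧
      ∀ w, T.child w u → w = v₁ ∨ w = v₂

/-- Adjacency in the color-set intersection graph `𝔠_T(u)`. -/
def csiAdj (T : PTree V) (σ : V → C) (u a b : V) : Prop :=
  a ≠ b ∧ T.child a u ∧ T.child b u ∧ (T.leafColors σ a ∩ T.leafColors σ b).Nonempty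

/-- `a` and `b` lie in the same connected component of `𝔠_T(u)`. -/
def sameComp (T : PTree V) (σ : V → C) (u a b : V) : Prop :=
  Relation.ReflTransGen (T.csiAdj σ u) a b

/-- `S` is a connected component of `𝔠_T(u)` with more than one element. -/
def IsBigComp (T : PTree V) (σ : V → C) (u : V) (S : Set V) : Prop :=
  (∃ a, T.child a u ∧ S = {b | T.sameComp σ u a b}) ∧ ∃ a ∈ S, ∃ b ∈ S, a ≠ b

end PTree

/-- `(T, σT)` explains the colored digraph `(E, σ)` on the gene set `L`, with
`ι` identifying the genes with the leaves of `T`. -/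
def Explains {V L C : Type*} (T : PTree V) (ι : L → V) (σT : V → C) (σ : L → C)
    (E : L → L → Prop) : Prop :=
  Function.Injective ι ∧ (∀ l, T.isLeaf (ι l)) ∧ (∀ v, T.isLeaf v → ∃ l, ι l = v) ∧
    (∀ l, σT (ι l) = σ l) ∧ ∀ x y, E x y ↔ T.bestMatch σT (ι x) (ι y)

/-- The parent function after contracting the edge `uv` (with `v` a child of `u`). -/
def contractedParent {V : Type*} [DecidableEq V] (T : PTree V) (u v w : V) : Option V :=
  (T.parent w).map (fun p => if p = v then u else p)

/-- One step towards the contracted parent when contracting all edges whose lower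
endpoints form the set `A`. -/
def multiContractStep {V : Type*} (T : PTree V) (A : Set V) (a b : V) : Prop :=
  T.parent a = some b ∧ b ∈ A

/-- Event types for inner vertices of an event-labeled gene tree. -/
inductive Event : Type
  | speciation
  | duplication


set_option linter.unusedSectionVars false

namespace PTree

variable {V C : Type*}

lemma no_cycle (T : PTree V) {a c : V} (hp : T.parent a = some c) (h : T.anc c a) : False := by
  have key : ∀ x : V, Relation.ReflTransGen (fun p q => T.parent p = some q) x T.root →
      ∀ d, T.parent x = some d → T.anc d x → False := by
    intro x hx
    induction hx using Relation.ReflTransGen.head_induction_on with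
    | refl =>
      intro d hd _
      rw [T.root_parent] at hd
      exact Option.some_ne_none d hd.symm
    | @head p q hpq hq ih =>
      intro d hd hdx
      have hdq : d = q := Option.some_inj.mp (hd ▸ hpq)
      subst hdq
      rcases hdx.cases_head with heq | ⟨e, he, hex⟩
      · subst heq
        exact ih d hd Relation.ReflTransGen.refl
      · exact ih e he (hex.tail hpq)
  exact key a (T.connected a) c hp h

lemma anc_antisymm (T : PTree V) {a b : V} (hab : T.anc a b) (hba : T.anc b a) : a = b := by
  rcases hab.cases_head with heq | ⟨c, hc, hcb⟩
  · exact heq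
  · exact (T.no_cycle hc (hcb.trans hba)).elim

lemma anc_total (T : PTree V) {a b c : V} (hab : T.anc a b) : T.anc a c → T.anc b c ∨ T.anc c b := by
  induction hab using Relation.ReflTransGen.head_induction_on with
  | refl => exact fun h => .inl h
  | @head p q hpq hq ih =>
    intro hpc
    rcases hpc.cases_head with heq | ⟨e, he, hec⟩
    · subst heq
      exact .inr (Relation.ReflTransGen.head hpq hq)
    · have heq : e = q := Option.some_inj.mp (he ▸ hpq)
      subst heq
      exact ih hec

lemma isLCA_left (T : PTree V) {a b : V} (h : T.anc b a) : T.isLCA a a b :=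
  ⟨Relation.ReflTransGen.refl, h, fun _ hw _ => hw⟩

lemma exists_lca (T : PTree V) (a b : V) : ∃ l, T.isLCA l a b := by
  have hx : Relation.ReflTransGen (fun p q => T.parent p = some q) a T.root := T.connected a
  induction hx using Relation.ReflTransGen.head_induction_on with
  | refl => exact ⟨T.root, T.isLCA_left (T.connected b)⟩
  | @head p q hpq hq ih =>
    by_cases hbp : T.anc b p
    · exact ⟨p, T.isLCA_left hbp⟩
    · obtain ⟨l, hl⟩ := ih
      refine ⟨l, Relation.ReflTransGen.head hpq hl.1, hl.2.1, ?_⟩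
      intro w hpw hbw
      rcases hpw.cases_head with heq | ⟨e, he, hew⟩
      · subst heq
        exact absurd hbw hbp
      · have heq : e = q := Option.some_inj.mp (he ▸ hpq)
        subst heq
        exact hl.2.2 w hew hbw

lemma lca_unique (T : PTree V) {l l' a b : V} (h1 : T.isLCA l a b) (h2 : T.isLCA l' a b) :
    l = l' :=
  T.anc_antisymm (h1.2.2 l' h2.1 h2.2.1) (h2.2.2 l h1.1 h1.2.1)

end PTree

lemma exists_min_of_total {α : Type*} (r : α → α → Prop)
    (htrans : ∀ {a b c}, r a b → r b c → r a c)
    (s : Finset α) (hs : s.Nonempty) (htot : ∀ a ∈ s, ∀ b ∈ s, r a b ∨ r b a) :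
    ∃ m ∈ s, ∀ a ∈ s, r m a := by
  classical
  revert hs htot
  induction s using Finset.induction with
  | empty => exact fun hs _ => absurd hs (by simp)
  | insert _ _ ha ih =>
    rename_i a s
    intro hs htot
    rcases s.eq_empty_or_nonempty with rfl | hs'
    · refine ⟨a, by simp, ?_⟩
      intro x hx
      rcases Finset.mem_insert.mp hx with rfl | hx
      · exact (htot x (by simp) x (by simp)).elim id id
      · exact absurd hx (by simp)
    · obtain ⟨m, hm, hmin⟩ := ih hs' (fun x hx y hy =>
        htot x (Finset.mem_insert_of_mem hx) y (Finset.mem_insert_of_mem hy))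
      rcases htot a (Finset.mem_insert_self a s) m (Finset.mem_insert_of_mem hm) with ham | hma
      · refine ⟨a, Finset.mem_insert_self a s, ?_⟩
        intro x hx
        rcases Finset.mem_insert.mp hx with rfl | hx
        · exact (htot x (Finset.mem_insert_self x s) x (Finset.mem_insert_self x s)).elim id id
        · exact htrans ham (hmin x hx)
      · refine ⟨m, Finset.mem_insert_of_mem hm, ?_⟩
        intro x hx
        rcases Finset.mem_insert.mp hx with rfl | hx
        · exact hma
        · exact hmin x hx

section Contract

variable {V C : Type*} [DecidableEq V] {T : PTree V} {u v : V}
  {T' : PTree {w : V // w ≠ v}}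

variable (huv : T.child v u)
  (hT' : ∀ w : {w : V // w ≠ v},
    (T'.parent w).map Subtype.val = contractedParent T u v w.1)

include huv

lemma u_ne_v : u ≠ v := by
  intro h
  subst h
  exact T.no_cycle huv Relation.ReflTransGen.refl

lemma anc_vu : T.anc v u := Relation.ReflTransGen.single huv

lemma not_anc_uv : ¬ T.anc u v := fun h =>
  u_ne_v huv (T.anc_antisymm h (anc_vu huv))

lemma step_up {w : V} (h : T.anc v w) (hw : w ≠ v) : T.anc u w := by
  rcases h.cases_head with heq | ⟨c, hc, hcw⟩
  · exact absurd heq.symm hw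
  · have : c = u := Option.some_inj.mp (hc ▸ huv)
    subst this
    exact hcw

lemma fvu_ne {c : V} : (if c = v then u else c) ≠ v := by
  by_cases h : c = v
  · simpa [h] using u_ne_v huv
  · simpa [h]

lemma u_not_leaf : ¬ T.isLeaf u := fun h => h v huv

include hT'

lemma parent'_some {w : {w : V // w ≠ v}} {c : V} (hc : T.parent w.1 = some c) :
    T'.parent w = some ⟨if c = v then u else c, fvu_ne huv⟩ := by
  have h := hT' w
  rw [contractedParent, hc, Option.map_some] at h
  rcases Option.map_eq_some_iff.mp h with ⟨p, hp, hpv⟩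
  rw [hp]
  exact congrArg some (Subtype.ext hpv)

lemma parent'_inv {w p : {w : V // w ≠ v}} (hp : T'.parent w = some p) :
    ∃ c, T.parent w.1 = some c ∧ p.1 = if c = v then u else c := by
  have h := hT' w
  rw [hp] at h
  cases hc : T.parent w.1 with
  | none => rw [contractedParent, hc] at h; simp at h
  | some c =>
    rw [contractedParent, hc, Option.map_some, Option.map_some] at h
    exact ⟨c, rfl, Option.some_inj.mp h⟩

lemma anc_lift {a b : V} (hb : b ≠ v) (h : T.anc a b) :
    T'.anc ⟨if a = v then u else a, fvu_ne huv⟩ ⟨b, hb⟩ := by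
  have h2 : Relation.ReflTransGen (fun x y => T.parent x = some y) a b := h
  clear h
  induction h2 using Relation.ReflTransGen.head_induction_on with
  | refl =>
    have e : (⟨if b = v then u else b, fvu_ne huv⟩ : {w : V // w ≠ v}) = ⟨b, hb⟩ :=
      Subtype.ext (if_neg hb)
    rw [e]
    exact Relation.ReflTransGen.refl
  | @head x c hpc hcb ih =>
    by_cases hx : x = v
    · have hpc' : T.parent v = some c := hx ▸ hpc
      have hc : c = u := Option.some_inj.mp (hpc' ▸ huv)
      have e : (⟨if x = v then u else x, fvu_ne huv⟩ : {w : V // w ≠ v})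
          = ⟨if c = v then u else c, fvu_ne huv⟩ :=
        Subtype.ext (show (if x = v then u else x) = (if c = v then u else c) by
          rw [if_pos hx, hc, if_neg (u_ne_v huv)])
      rw [e]
      exact ih
    · have e : (⟨if x = v then u else x, fvu_ne huv⟩ : {w : V // w ≠ v})
          = ⟨x, hx⟩ := Subtype.ext (if_neg hx)
      rw [e]
      exact Relation.ReflTransGen.head (parent'_some huv hT' hpc) ih

lemma anc_lift' {a b : V} (ha : a ≠ v) (hb : b ≠ v) (h : T.anc a b) :
    T'.anc ⟨a, ha⟩ ⟨b, hb⟩ := by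
  have e : (⟨a, ha⟩ : {w : V // w ≠ v}) = ⟨if a = v then u else a, fvu_ne huv⟩ :=
    Subtype.ext (if_neg ha).symm
  rw [e]
  exact anc_lift huv hT' hb h

lemma anc_descend {a b : {w : V // w ≠ v}} (h : T'.anc a b) : T.anc a.1 b.1 := by
  have h2 : Relation.ReflTransGen (fun x y => T'.parent x = some y) a b := h
  clear h
  induction h2 using Relation.ReflTransGen.head_induction_on with
  | refl => exact Relation.ReflTransGen.refl
  | @head x c hpc hcb ih =>
    obtain ⟨d, hd, hdc⟩ := parent'_inv huv hT' hpc
    by_cases hdv : d = v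
    · rw [if_pos hdv] at hdc
      rw [hdv] at hd
      exact Relation.ReflTransGen.head hd (Relation.ReflTransGen.head huv (hdc ▸ ih))
    · rw [if_neg hdv] at hdc
      exact Relation.ReflTransGen.head (hdc ▸ hd) ih

lemma child'_intro1 {x w : V} (hx : x ≠ v) (hw : w ≠ v) (h : T.child x w) :
    T'.child ⟨x, hx⟩ ⟨w, hw⟩ := by
  have h2 := parent'_some huv hT' (w := ⟨x, hx⟩) h
  have e : (⟨if w = v then u else w, fvu_ne huv⟩ : {w : V // w ≠ v}) = ⟨w, hw⟩ :=
    Subtype.ext (if_neg hw)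
  rwa [e] at h2

lemma child'_intro2 {x : V} (hx : x ≠ v) (h : T.child x v) :
    T'.child ⟨x, hx⟩ ⟨u, u_ne_v huv⟩ := by
  have h2 := parent'_some huv hT' (w := ⟨x, hx⟩) h
  have e : (⟨if v = v then u else v, fvu_ne huv⟩ : {w : V // w ≠ v}) = ⟨u, u_ne_v huv⟩ :=
    Subtype.ext (if_pos rfl)
  rwa [e] at h2

lemma child'_elim {x w : {w : V // w ≠ v}} (h : T'.child x w) :
    T.child x.1 w.1 ∨ (T.child x.1 v ∧ w.1 = u) := by
  obtain ⟨c, hc, hcw⟩ := parent'_inv huv hT' h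
  by_cases hcv : c = v
  · rw [if_pos hcv] at hcw
    exact Or.inr ⟨hcv ▸ hc, hcw⟩
  · rw [if_neg hcv] at hcw
    exact Or.inl (hcw ▸ hc)

lemma leaf_iff {w : V} (hwu : w ≠ u) (hw : w ≠ v) :
    T.isLeaf w ↔ T'.isLeaf ⟨w, hw⟩ := by
  constructor
  · intro h x hx
    rcases child'_elim huv hT' hx with h1 | ⟨h1, h2⟩
    · exact h x.1 h1
    · exact hwu h2
  · intro h x hx
    have hxv : x ≠ v := by
      intro e
      apply hwu
      have : T.parent v = some w := e ▸ hx
      exact Option.some_inj.mp (this ▸ huv)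
    exact h ⟨x, hxv⟩ (child'_intro1 huv hT' hxv hw hx)

lemma u_not_leaf' (hv : ¬ T.isLeaf v) : ¬ T'.isLeaf ⟨u, u_ne_v huv⟩ := by
  intro h
  simp only [PTree.isLeaf, not_forall, not_not] at hv
  obtain ⟨c, hc⟩ := hv
  have hcv : c ≠ v := by
    intro e
    have : T.parent v = some v := e ▸ hc
    exact u_ne_v huv (Option.some_inj.mp (this ▸ huv)).symm
  exact h ⟨c, hcv⟩ (child'_intro2 huv hT' hcv hc)

lemma lca_lift_ne {l a b : V} (hl : l ≠ v) (ha : a ≠ v) (hb : b ≠ v)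
    (h : T.isLCA l a b) : T'.isLCA ⟨l, hl⟩ ⟨a, ha⟩ ⟨b, hb⟩ := by
  refine ⟨anc_lift' huv hT' ha hl h.1, anc_lift' huv hT' hb hl h.2.1, ?_⟩
  intro w hw1 hw2
  exact anc_lift' huv hT' hl w.2
    (h.2.2 w.1 (anc_descend huv hT' hw1) (anc_descend huv hT' hw2))

lemma lca_lift_v {a b : V} (ha : a ≠ v) (hb : b ≠ v)
    (h : T.isLCA v a b) : T'.isLCA ⟨u, u_ne_v huv⟩ ⟨a, ha⟩ ⟨b, hb⟩ := by
  refine ⟨anc_lift' huv hT' ha (u_ne_v huv) (h.1.tail huv),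
    anc_lift' huv hT' hb (u_ne_v huv) (h.2.1.tail huv), ?_⟩
  intro w hw1 hw2
  have h2 : T.anc v w.1 := h.2.2 w.1 (anc_descend huv hT' hw1) (anc_descend huv hT' hw2)
  exact anc_lift' huv hT' (u_ne_v huv) w.2 (step_up huv h2 w.2)

lemma lca'_cases {a b : V} (ha : a ≠ v) (hb : b ≠ v) {l' : {w : V // w ≠ v}}
    (h' : T'.isLCA l' ⟨a, ha⟩ ⟨b, hb⟩) :
    ∃ l, T.isLCA l a b ∧ ((l ≠ v ∧ l'.1 = l) ∨ (l = v ∧ l'.1 = u)) := by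
  obtain ⟨l, hl⟩ := T.exists_lca a b
  by_cases hlv : l = v
  · refine ⟨l, hl, Or.inr ⟨hlv, ?_⟩⟩
    have := T'.lca_unique h' (lca_lift_v huv hT' ha hb (hlv ▸ hl))
    exact congrArg Subtype.val this
  · refine ⟨l, hl, Or.inl ⟨hlv, ?_⟩⟩
    have := T'.lca_unique h' (lca_lift_ne huv hT' hlv ha hb hl)
    exact congrArg Subtype.val this

omit huv hT' in
lemma exists_best [Fintype V] (T : PTree V) {C : Type*} (σ : V → C) (x y' : V)
    (hy' : T.isLeaf y') (c : C) (hc : σ y' = c) :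
    ∃ b m, T.isLeaf b ∧ σ b = c ∧ T.isLCA m x b ∧
      ∀ y'' l'', T.isLeaf y'' → σ y'' = c → T.isLCA l'' x y'' → T.anc m l'' := by
  classical
  set P : V → Prop := fun m => ∃ b, T.isLeaf b ∧ σ b = c ∧ T.isLCA m x b with hP
  have hSne : (Finset.univ.filter P).Nonempty := by
    obtain ⟨l, hl⟩ := T.exists_lca x y'
    refine ⟨l, ?_⟩
    simp only [Finset.mem_filter, Finset.mem_univ, true_and, hP]
    exact ⟨y', hy', hc, hl⟩
  have htot : ∀ p ∈ Finset.univ.filter P, ∀ q ∈ Finset.univ.filter P,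
      T.anc p q ∨ T.anc q p := by
    intro p hp q hq
    simp only [Finset.mem_filter, Finset.mem_univ, true_and, hP] at hp hq
    obtain ⟨bp, _, _, hlp⟩ := hp
    obtain ⟨bq, _, _, hlq⟩ := hq
    exact T.anc_total hlp.1 hlq.1
  obtain ⟨m, hm, hmin⟩ := exists_min_of_total T.anc (fun h1 h2 => h1.trans h2) _ hSne htot
  simp only [Finset.mem_filter, Finset.mem_univ, true_and, hP] at hm
  obtain ⟨b, hb1, hb2, hb3⟩ := hm
  refine ⟨b, m, hb1, hb2, hb3, ?_⟩
  intro y'' l'' h1 h2 h3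
  refine hmin l'' ?_
  simp only [Finset.mem_filter, Finset.mem_univ, true_and, hP]
  exact ⟨y'', h1, h2, h3⟩

variable {C : Type*}

lemma bm_lift {σ : V → C} (hv : ¬ T.isLeaf v) {a b : V} (ha : a ≠ v) (hb : b ≠ v)
    (h : T.bestMatch σ a b) :
    T'.bestMatch (fun z => σ z.1) ⟨a, ha⟩ ⟨b, hb⟩ := by
  obtain ⟨hla, hlb, hσ, hmin⟩ := h
  have hau : a ≠ u := fun e => u_not_leaf huv (e ▸ hla)
  have hbu : b ≠ u := fun e => u_not_leaf huv (e ▸ hlb)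
  refine ⟨(leaf_iff huv hT' hau ha).mp hla, (leaf_iff huv hT' hbu hb).mp hlb, hσ, ?_⟩
  intro y' hy' hσy' l l' hl hl'
  have hy'u : y'.1 ≠ u := by
    intro e
    exact u_not_leaf' huv hT' hv
      (by rwa [show y' = ⟨u, u_ne_v huv⟩ from Subtype.ext e] at hy')
  have hy'T : T.isLeaf y'.1 := (leaf_iff huv hT' hy'u y'.2).mpr hy'
  obtain ⟨l₀, hl₀, hcase⟩ := lca'_cases huv hT' ha hb hl
  obtain ⟨l₀', hl₀', hcase'⟩ := lca'_cases huv hT' (b := y'.1) ha y'.2 hl'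
  have hanc : T.anc l₀ l₀' := hmin y'.1 hy'T hσy' l₀ l₀' hl₀ hl₀'
  rcases hcase with ⟨hlv, hel⟩ | ⟨hlv, hel⟩ <;>
    rcases hcase' with ⟨hl'v, hel'⟩ | ⟨hl'v, hel'⟩
  · rw [show l = ⟨l₀, hlv⟩ from Subtype.ext hel,
      show l' = ⟨l₀', hl'v⟩ from Subtype.ext hel']
    exact anc_lift' huv hT' hlv hl'v hanc
  · rw [show l = ⟨l₀, hlv⟩ from Subtype.ext hel,
      show l' = ⟨u, u_ne_v huv⟩ from Subtype.ext hel']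
    exact anc_lift' huv hT' hlv (u_ne_v huv) ((hl'v ▸ hanc).tail huv)
  · rw [show l = ⟨u, u_ne_v huv⟩ from Subtype.ext hel,
      show l' = ⟨l₀', hl'v⟩ from Subtype.ext hel']
    exact anc_lift' huv hT' (u_ne_v huv) hl'v (step_up huv (hlv ▸ hanc) hl'v)
  · rw [show l = ⟨u, u_ne_v huv⟩ from Subtype.ext hel,
      show l' = ⟨u, u_ne_v huv⟩ from Subtype.ext hel']
    exact Relation.ReflTransGen.refl

lemma bm_descend [Fintype V] {σ : V → C} (hv : ¬ T.isLeaf v)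
    (hno : ¬ ∃ a b, T.bestMatch σ a b ∧ T.isLCA v a b ∧
      ∃ z, T.isLeaf z ∧ T.anc z u ∧ ¬ T.anc z v ∧ σ z = σ b)
    {a b : V} (ha : a ≠ v) (hb : b ≠ v)
    (h : T'.bestMatch (fun z => σ z.1) ⟨a, ha⟩ ⟨b, hb⟩) : T.bestMatch σ a b := by
  obtain ⟨hla', hlb', hσ, hmin'⟩ := h
  have hau : a ≠ u := by
    intro e; subst e
    exact u_not_leaf' huv hT' hv hla'
  have hbu : b ≠ u := by
    intro e; subst e
    exact u_not_leaf' huv hT' hv hlb'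
  have hla : T.isLeaf a := (leaf_iff huv hT' hau ha).mpr hla'
  have hlb : T.isLeaf b := (leaf_iff huv hT' hbu hb).mpr hlb'
  refine ⟨hla, hlb, hσ, ?_⟩
  intro y' hy' hσy' l l' hl hl'
  have hy'v : y' ≠ v := fun e => hv (e ▸ hy')
  have hy'u : y' ≠ u := fun e => u_not_leaf huv (e ▸ hy')
  have hy'' : T'.isLeaf ⟨y', hy'v⟩ := (leaf_iff huv hT' hy'u hy'v).mp hy'
  by_cases hlv : l = v <;> by_cases hl'v : l' = v
  · rw [hlv, hl'v]
    exact Relation.ReflTransGen.refl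
  · have h1 := hmin' ⟨y', hy'v⟩ hy'' hσy' ⟨u, u_ne_v huv⟩ ⟨l', hl'v⟩
      (lca_lift_v huv hT' ha hb (hlv ▸ hl)) (lca_lift_ne huv hT' hl'v ha hy'v hl')
    have h2 : T.anc u l' := anc_descend huv hT' h1
    rw [hlv]
    exact (Relation.ReflTransGen.single huv).trans h2
  · -- hard case : l ≠ v, l' = v
    have haw : T.anc a v := hl'v ▸ hl'.1
    rcases T.anc_total haw hl.1 with hvl | hlv2
    · -- T.anc v l with l ≠ v : l = u, contradiction via hno
      exfalso
      have hul : T.anc u l := step_up huv hvl hlv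
      have h1 := hmin' ⟨y', hy'v⟩ hy'' hσy' ⟨l, hlv⟩ ⟨u, u_ne_v huv⟩
        (lca_lift_ne huv hT' hlv ha hb hl) (lca_lift_v huv hT' ha hy'v (hl'v ▸ hl'))
      have hlu : T.anc l u := anc_descend huv hT' h1
      have hlequ : l = u := T.anc_antisymm hlu hul
      obtain ⟨b₀, m, hlb₀, hσb₀, hm, hmmin⟩ := exists_best T σ a y' hy' (σ b) hσy'
      have hmv : T.anc m v := by
        have := hmmin y' l' hy' hσy' hl'
        rwa [hl'v] at this
      by_cases hmev : m = v
      · apply hno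
        refine ⟨a, b₀, ?_, hmev ▸ hm, b, hlb, ?_, ?_, hσb₀.symm⟩
        · refine ⟨hla, hlb₀, fun e => hσ (e.trans hσb₀), ?_⟩
          intro y'' hy''2 hσy''2 w w' hw hw'
          have hw_eq : w = m := T.lca_unique hw hm
          rw [hw_eq]
          exact hmmin y'' w' hy''2 (hσy''2.trans hσb₀) hw'
        · exact hlequ ▸ hl.2.1
        · intro hbv
          have : T.anc l v := hl.2.2 v haw hbv
          exact not_anc_uv huv (hlequ ▸ this)
      · -- m ≠ v : direct contradiction
        have hb₀v : b₀ ≠ v := fun e => hv (e ▸ hlb₀)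
        have hb₀u : b₀ ≠ u := fun e => u_not_leaf huv (e ▸ hlb₀)
        have hb₀leaf' : T'.isLeaf ⟨b₀, hb₀v⟩ := (leaf_iff huv hT' hb₀u hb₀v).mp hlb₀
        have h2 := hmin' ⟨b₀, hb₀v⟩ hb₀leaf' hσb₀ ⟨u, u_ne_v huv⟩ ⟨m, hmev⟩
          (lca_lift_ne huv hT' (u_ne_v huv) ha hb (hlequ ▸ hl))
          (lca_lift_ne huv hT' hmev ha hb₀v hm)
        have hum : T.anc u m := anc_descend huv hT' h2
        have hmu : T.anc m u := hmv.trans (Relation.ReflTransGen.single huv)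
        have : m = u := T.anc_antisymm hmu hum
        exact not_anc_uv huv (this ▸ hmv)
    · rw [hl'v]
      exact hlv2
  · have h1 := hmin' ⟨y', hy'v⟩ hy'' hσy' ⟨l, hlv⟩ ⟨l', hl'v⟩
      (lca_lift_ne huv hT' hlv ha hb hl) (lca_lift_ne huv hT' hl'v ha hy'v hl')
    exact anc_descend huv hT' h1

end Contract


/-- An edge `uv` of `T` (with `v` a child of `u`) is redundant
w.r.t. the BMG `G(T,σ)` — i.e. the contraction `T'` has the same leaf set and
the same best-match arcs, and `uv` is not the planted root edge — if and only if
(i) `uv` is an inner edge (`v` is not a leaf and `u` is not the planted root)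
and (ii) there is no arc `(a,b)` of `G(T,σ)` with `lca(a,b) = v` and
`σ(b) ∈ σ(L(T(u)) \ L(T(v)))`. -/
theorem stmt_4 {V C : Type*} [Fintype V] [DecidableEq V] (T : PTree V)
    (σ : V → C) (u v : V) (huv : T.child v u)
    (T' : PTree {w : V // w ≠ v})
    (hT' : ∀ w : {w : V // w ≠ v},
      (T'.parent w).map Subtype.val = contractedParent T u v w.1) :
    (u ≠ T.root ∧
      (∀ w : V, T.isLeaf w ↔ ∃ h : w ≠ v, T'.isLeaf ⟨w, h⟩) ∧
      (∀ x y : V, T.bestMatch σ x y ↔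
        ∃ (hx : x ≠ v) (hy : y ≠ v),
          T'.bestMatch (fun z => σ z.1) ⟨x, hx⟩ ⟨y, hy⟩)) ↔
      ((¬ T.isLeaf v ∧ u ≠ T.root) ∧
        ¬ ∃ a b, T.bestMatch σ a b ∧ T.isLCA v a b ∧
          ∃ z, T.isLeaf z ∧ T.anc z u ∧ ¬ T.anc z v ∧ σ z = σ b) := by
  constructor
  · rintro ⟨h1, h2, h3⟩
    have hv : ¬ T.isLeaf v := by
      intro hl
      obtain ⟨hne, -⟩ := (h2 v).mp hl
      exact hne rfl
    refine ⟨⟨hv, h1⟩, ?_⟩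
    rintro ⟨a, b, hab, hlca, z, hlz, hzu, hzv, hσz⟩
    obtain ⟨hla, hlb, hσab, habmin⟩ := hab
    have hav : a ≠ v := fun e => hv (e ▸ hla)
    have hbv : b ≠ v := fun e => hv (e ▸ hlb)
    have hzv' : z ≠ v := fun e => hv (e ▸ hlz)
    have hau : a ≠ u := fun e => u_not_leaf huv (e ▸ hla)
    have hzu' : z ≠ u := fun e => u_not_leaf huv (e ▸ hlz)
    have hlcaz : T.isLCA u a z := by
      refine ⟨hlca.1.tail huv, hzu, ?_⟩
      intro w haw hzw
      rcases T.anc_total hlca.1 haw with hvw | hwv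
      · have hwv' : w ≠ v := fun e => hzv (e ▸ hzw)
        exact step_up huv hvw hwv'
      · exact absurd (hzw.trans hwv) hzv
    have hnbm : ¬ T.bestMatch σ a z :=
      fun hbm => not_anc_uv huv (hbm.2.2.2 b hlb hσz.symm u v hlcaz hlca)
    apply hnbm
    apply (h3 a z).mpr
    refine ⟨hav, hzv', ?_⟩
    refine ⟨(leaf_iff huv hT' hau hav).mp hla, (leaf_iff huv hT' hzu' hzv').mp hlz,
      fun e => hσab (e.trans hσz), ?_⟩
    intro y' hy' hσy' l l' hl hl'
    have hlequ : l = ⟨u, u_ne_v huv⟩ :=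
      T'.lca_unique hl (lca_lift_ne huv hT' (u_ne_v huv) hav hzv' hlcaz)
    have hy'u : y'.1 ≠ u := fun e =>
      u_not_leaf' huv hT' hv (by rwa [show y' = ⟨u, u_ne_v huv⟩ from Subtype.ext e] at hy')
    have hy'T : T.isLeaf y'.1 := (leaf_iff huv hT' hy'u y'.2).mpr hy'
    obtain ⟨l₀', hl₀', hcase'⟩ := lca'_cases huv hT' (b := y'.1) hav y'.2 hl'
    have hvl₀' : T.anc v l₀' := habmin y'.1 hy'T (hσy'.trans hσz) v l₀' hlca hl₀'
    rw [hlequ]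
    rcases hcase' with ⟨hl'v2, hel'⟩ | ⟨hl'v2, hel'⟩
    · rw [show l' = ⟨l₀', hl'v2⟩ from Subtype.ext hel']
      exact anc_lift' huv hT' (u_ne_v huv) hl'v2 (step_up huv hvl₀' hl'v2)
    · rw [show l' = ⟨u, u_ne_v huv⟩ from Subtype.ext hel']
      exact Relation.ReflTransGen.refl
  · rintro ⟨⟨hv, hroot⟩, hno⟩
    refine ⟨hroot, ?_, ?_⟩
    · intro w
      by_cases hw : w = v
      · constructor
        · intro h; rw [hw] at h; exact absurd h hv
        · rintro ⟨hne, -⟩; exact absurd hw hne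
      · by_cases hwu : w = u
        · constructor
          · intro h; rw [hwu] at h; exact absurd h (u_not_leaf huv)
          · rintro ⟨hne, hl⟩
            subst hwu
            exact absurd hl (u_not_leaf' huv hT' hv)
        · constructor
          · intro h; exact ⟨hw, (leaf_iff huv hT' hwu hw).mp h⟩
          · rintro ⟨hne, hl⟩; exact (leaf_iff huv hT' hwu hne).mpr hl
    · intro x y
      constructor
      · intro h
        have hx : x ≠ v := fun e => hv (e ▸ h.1)
        have hy : y ≠ v := fun e => hv (e ▸ h.2.1)
        exact ⟨hx, hy, bm_lift huv hT' hv hx hy h⟩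
      · rintro ⟨hx, hy, h⟩
        exact bm_descend huv hT' hv hno hx hy h
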